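/- arXiv:2502.11091 — 2 statements merged into one kernel-verified Lean document; each statement's English description precedes it below -/
import Mathlib

section
/- (Completeness of QBUA) For all resource functions P, Q depending on only finitely many variables (finitely supported) and all commands C: if the QBUA validity ⊨B [P] C [Q] holds, then ⊢B [P] C [Q] is derivable in the QBUA proof system. -/
/-! Basic language: variables, states, semantic expressions, resource values. -/

abbrev Var := String
abbrev State := Var → ℤ
abbrev AExp := State → ℤ
abbrev BExp := State → Bool

/-- Resource values: ℤ ∪ {−∞, +∞}. -/
abbrev RVal := WithTop (WithBot ℤ)
/-- Resource functions. -/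
abbrev RF := State → RVal

/-- Embedding of an integer into `RVal`. -/
def iv (n : ℤ) : RVal := ((n : WithBot ℤ) : RVal)

/-- State update. -/
def upd (σ : State) (x : Var) (v : ℤ) : State := fun y => if y = x then v else σ y

/-- Commands of the IMP-like language. -/
inductive Cmd where
  | skip
  | assign (x : Var) (e : AExp)
  | assume' (b : BExp)
  | tick (e : AExp)
  | seq (c₁ c₂ : Cmd)
  | choice (c₁ c₂ : Cmd)
  | star (c : Cmd)
  | local' (x : Var) (c : Cmd)

/-- Resource-aware big-step semantics: `BigStep C σ p l τ q` is C, σ, p ⇓_l τ, q. -/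
inductive BigStep : Cmd → State → ℤ → ℤ → State → ℤ → Prop where
  | skip {σ p} : BigStep .skip σ p p σ p
  | assign {x e σ p} : BigStep (.assign x e) σ p p (upd σ x (e σ)) p
  | assume' {b : BExp} {σ p} : b σ = true → BigStep (.assume' b) σ p p σ p
  | tick {e σ p} : BigStep (.tick e) σ p (min p (p - e σ)) σ (p - e σ)
  | seq {c₁ c₂ σ p l₁ ρ r l₂ τ q} : BigStep c₁ σ p l₁ ρ r → BigStep c₂ ρ r l₂ τ q →
      BigStep (.seq c₁ c₂) σ p (min l₁ l₂) τ q
  | choiceL {c₁ c₂ σ p l τ q} : BigStep c₁ σ p l τ q → BigStep (.choice c₁ c₂) σ p l τ q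
  | choiceR {c₁ c₂ σ p l τ q} : BigStep c₂ σ p l τ q → BigStep (.choice c₁ c₂) σ p l τ q
  | starZero {c σ p} : BigStep (.star c) σ p p σ p
  | starStep {c σ p l τ q} : BigStep (.seq c (.star c)) σ p l τ q → BigStep (.star c) σ p l τ q
  | local' {x c σ p l τ q} (v : ℤ) : BigStep c σ p l τ q →
      BigStep (.local' x c) (upd σ x v) p l (upd τ x v) q

/-- C, σ, p ⇓ τ, q. -/
def BigStepP (c : Cmd) (σ : State) (p : ℤ) (τ : State) (q : ℤ) : Prop :=
  ∃ l, BigStep c σ p l τ q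

/-- C, σ, p ⇓≤0 τ, q. -/
def BigStepL (c : Cmd) (σ : State) (p : ℤ) (τ : State) (q : ℤ) : Prop :=
  ∃ l ≤ 0, BigStep c σ p l τ q

/-- `Indep f S`: the state function `f` does not depend on the variables in `S`
(i.e. fv(f) ∩ S = ∅). -/
def Indep {α : Type _} (f : State → α) (S : Set Var) : Prop :=
  ∀ σ σ' : State, (∀ y ∉ S, σ y = σ' y) → f σ = f σ'

/-- `Fresh y f`: the variable `y` is not free in the state function `f`. -/
def Fresh {α : Type _} (y : Var) (f : State → α) : Prop :=
  ∀ σ v, f (upd σ y v) = f σ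

/-- The set of variables possibly modified by a command. -/
def modVars : Cmd → Set Var
  | .skip => ∅
  | .assign x _ => {x}
  | .assume' _ => ∅
  | .tick _ => ∅
  | .seq c₁ c₂ => modVars c₁ ∪ modVars c₂
  | .choice c₁ c₂ => modVars c₁ ∪ modVars c₂
  | .star c => modVars c
  | .local' x c => modVars c \ {x}

/-- Substitution e[y/x] on semantic expressions. -/
def esubst {α : Type _} (e : State → α) (x y : Var) : State → α :=
  fun σ => e (upd σ x (σ y))

/-- `y` is not free in the command `C`. -/
def freshC (y : Var) : Cmd → Prop
  | .skip => True
  | .assign z e => y ≠ z ∧ Fresh y e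
  | .assume' b => Fresh y b
  | .tick e => Fresh y e
  | .seq c₁ c₂ => freshC y c₁ ∧ freshC y c₂
  | .choice c₁ c₂ => freshC y c₁ ∧ freshC y c₂
  | .star c => freshC y c
  | .local' z c => y = z ∨ freshC y c

/-- Substitution C[y/x]: rename every free occurrence of `x` in `C` to `y`. -/
def csubst : Cmd → Var → Var → Cmd
  | .skip, _, _ => .skip
  | .assign z e, x, y => .assign (if z = x then y else z) (esubst e x y)
  | .assume' b, x, y => .assume' (esubst b x y)
  | .tick e, x, y => .tick (esubst e x y)
  | .seq c₁ c₂, x, y => .seq (csubst c₁ x y) (csubst c₂ x y)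
  | .choice c₁ c₂, x, y => .choice (csubst c₁ x y) (csubst c₂ x y)
  | .star c, x, y => .star (csubst c x y)
  | .local' z c, x, y => if z = x then .local' z c else .local' z (csubst c x y)

/-- Bounded iteration: C⁰ = skip, C^(n+1) = C; Cⁿ. -/
def iter (c : Cmd) : ℕ → Cmd
  | 0 => .skip
  | n + 1 => .seq c (iter c n)

/-- Pointwise order on resource functions. -/
def rle (P Q : RF) : Prop := ∀ σ, P σ ≤ Q σ

/-- [B]: +∞ if B holds, −∞ otherwise. -/
def bnd (b : BExp) : RF := fun σ => if b σ then ⊤ else ⊥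

/-- `P` is finitely supported: it depends on only finitely many variables. -/
def FinSupp (P : RF) : Prop := ∃ S : Finset Var, Indep P ((↑S : Set Var)ᶜ)

/-- Semantic equivalence of commands. -/
def CEquiv (c c' : Cmd) : Prop := ∀ σ p l τ q, BigStep c σ p l τ q ↔ BigStep c' σ p l τ q

/-- QFUA validity ⊨F [P] C [Q]. -/
def FValid (P : RF) (c : Cmd) (Q : RF) : Prop :=
  ∀ τ (q : ℤ), Q τ ≤ iv q → ∃ σ, ∃ p : ℤ, P σ ≤ iv p ∧ BigStepP c σ p τ q

/-- QBUA validity ⊨B [P] C [Q]. -/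
def BValid (P : RF) (c : Cmd) (Q : RF) : Prop :=
  ∀ σ (p : ℤ), iv p ≤ P σ → ∃ τ, ∃ q : ℤ, iv q ≤ Q τ ∧ BigStepP c σ p τ q

/-- QBUA◇ validity ⊨B◇ [P] C [Q]. -/
def DValid (P : RF) (c : Cmd) (Q : RF) : Prop :=
  ∀ σ (p : ℤ), iv p ≤ P σ → ∃ τ, ∃ q : ℤ, iv q ≤ Q τ ∧ BigStepL c σ p τ q

/-- The QBUA proof system ⊢B [P] C [Q]. -/
inductive QBUA : RF → Cmd → RF → Prop where
  | skip {P} : QBUA P .skip P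
  | assign {P : RF} {x e} :
      QBUA P (.assign x e)
        (fun τ => ⨆ v : ℤ, min (P (upd τ x v)) (if τ x = e (upd τ x v) then ⊤ else ⊥))
  | assume' {P : RF} {b : BExp} :
      QBUA (fun σ => min (P σ) (bnd b σ)) (.assume' b) (fun σ => min (P σ) (bnd b σ))
  | tick {P : RF} {e} : QBUA P (.tick e) (fun σ => P σ + iv (-(e σ)))
  | seq {P R Q c₁ c₂} : QBUA P c₁ R → QBUA R c₂ Q → QBUA P (.seq c₁ c₂) Q
  | choiceL {P Q c₁ c₂} : QBUA P c₁ Q → QBUA P (.choice c₁ c₂) Q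
  | choiceR {P Q c₁ c₂} : QBUA P c₂ Q → QBUA P (.choice c₁ c₂) Q
  | loop {P : ℕ → RF} {k : ℕ} {c} :
      (∀ n < k, QBUA (P n) c (P (n + 1))) → QBUA (P 0) (.star c) (P k)
  | local' {P Q : RF} {x c} : QBUA P c Q →
      QBUA (fun σ => ⨆ v : ℤ, P (upd σ x v)) (.local' x c) (fun σ => ⨆ v : ℤ, Q (upd σ x v))
  | disj {I : Type} {Ps Qs : I → RF} {c} : (∀ i, QBUA (Ps i) c (Qs i)) →
      QBUA (fun σ => ⨆ i, Ps i σ) c (fun σ => ⨆ i, Qs i σ)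
  | constancy {P Q : RF} {b : BExp} {c} : QBUA P c Q → Indep b (modVars c) →
      QBUA (fun σ => min (P σ) (bnd b σ)) c (fun σ => min (Q σ) (bnd b σ))
  | relax {P Q F : RF} {c} : QBUA P c Q → Indep F (modVars c) →
      QBUA (fun σ => P σ + F σ) c (fun σ => Q σ + F σ)
  | cons {P P' Q Q' : RF} {c} : rle P P' → QBUA P' c Q' → rle Q' Q → QBUA P c Q
  | subst {P Q : RF} {c x y} : QBUA P c Q → Fresh y P → Fresh y Q → freshC y c →
      QBUA (esubst P x y) (csubst c x y) (esubst Q x y)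
  | equiv {P Q c c'} : QBUA P c Q → CEquiv c c' → QBUA P c' Q


/-! ### Auxiliary material for the completeness proof -/

section Aux

open Classical

/-- Point resource function: `iv p` at state `σ₀`, `⊥` elsewhere. -/
noncomputable def pt (σ₀ : State) (p : ℤ) : RF := fun σ => if σ = σ₀ then iv p else ⊥

lemma pt_eq (σ₀ : State) (p : ℤ) : pt σ₀ p σ₀ = iv p := if_pos rfl

lemma pt_ne {σ σ₀ : State} (h : σ ≠ σ₀) (p : ℤ) : pt σ₀ p σ = ⊥ := if_neg h

lemma pt_le (σ₀ : State) (p : ℤ) (σ : State) : pt σ₀ p σ ≤ iv p := by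
  unfold pt; split
  · exact le_refl _
  · exact bot_le

lemma upd_same (σ : State) (x : Var) (v : ℤ) : upd σ x v x = v := if_pos rfl

lemma upd_ne {y x : Var} (h : y ≠ x) (σ : State) (v : ℤ) : upd σ x v y = σ y := if_neg h

lemma upd_upd (σ : State) (x : Var) (v w : ℤ) : upd (upd σ x v) x w = upd σ x w := by
  funext y
  by_cases hy : y = x
  · subst hy; rw [upd_same, upd_same]
  · rw [upd_ne hy, upd_ne hy, upd_ne hy]

lemma upd_self (σ : State) (x : Var) : upd σ x (σ x) = σ := by
  funext y
  by_cases hy : y = x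
  · subst hy; rw [upd_same]
  · rw [upd_ne hy]

lemma iv_add (a b : ℤ) : iv a + iv b = iv (a + b) := by
  simp only [iv, ← WithTop.coe_add, ← WithBot.coe_add]

lemma bot_add_iv (b : ℤ) : (⊥ : RVal) + iv b = ⊥ := by
  have h : (⊥ : RVal) = ((⊥ : WithBot ℤ) : RVal) := rfl
  rw [h, iv, ← WithTop.coe_add]
  simp

lemma exists_iv_gt (b : RVal) (hb : b ≠ ⊤) : ∃ m : ℤ, b < iv m := by
  induction b using WithTop.recTopCoe with
  | top => exact absurd rfl hb
  | coe c =>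
    induction c using WithBot.recBotCoe with
    | bot =>
      refine ⟨0, ?_⟩
      rw [iv, WithTop.coe_lt_coe]
      exact bot_lt_iff_ne_bot.2 (by simp)
    | coe m =>
      refine ⟨m + 1, ?_⟩
      rw [iv, WithTop.coe_lt_coe]
      exact_mod_cast lt_add_one m

lemma rval_le_iSup {ι : Type _} (f : ι → RVal) (r : RVal)
    (h : ∀ m : ℤ, iv m ≤ r → ∃ i, iv m ≤ f i) : r ≤ ⨆ i, f i := by
  by_cases hT : r = ⊤
  · subst hT
    rw [top_le_iff, iSup_eq_top]
    intro b hb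
    obtain ⟨m, hm⟩ := exists_iv_gt b hb.ne
    obtain ⟨i, hi⟩ := h m le_top
    exact ⟨i, lt_of_lt_of_le hm hi⟩
  · induction r using WithTop.recTopCoe with
    | top => exact absurd rfl hT
    | coe c =>
      induction c using WithBot.recBotCoe with
      | bot => exact bot_le
      | coe m =>
        obtain ⟨i, hi⟩ := h m (le_refl _)
        exact le_trans hi (le_iSup f i)

/-- A chain of `n` steps of `c` from `(σ, p)` to `(τ, q)`. -/
def Chain (c : Cmd) (σ : State) (p : ℤ) (τ : State) (q : ℤ) : Prop :=
  ∃ n, ∃ f : ℕ → State × ℤ, f 0 = (σ, p) ∧ f n = (τ, q) ∧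
    ∀ i < n, ∃ l', BigStep c (f i).1 (f i).2 l' (f (i + 1)).1 (f (i + 1)).2

lemma Chain.nil {c σ p} : Chain c σ p σ p :=
  ⟨0, fun _ => (σ, p), rfl, rfl, fun i hi => absurd hi (Nat.not_lt_zero i)⟩

lemma Chain.cons {c σ p l ρ r τ q} (h : BigStep c σ p l ρ r) (hc : Chain c ρ r τ q) :
    Chain c σ p τ q := by
  obtain ⟨n, f, h0, hn, hst⟩ := hc
  refine ⟨n + 1, fun i => if i = 0 then (σ, p) else f (i - 1), rfl, by simp [hn], ?_⟩
  intro i hi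
  cases i with
  | zero =>
    simp only [if_pos rfl, Nat.one_ne_zero, if_neg, ite_false]
    simp [h0]
    exact ⟨l, h⟩
  | succ j =>
    simp only [Nat.succ_ne_zero, ite_false, Nat.succ_sub_one]
    exact hst j (by omega)

lemma chain_aux {C σ p l τ q} (h : BigStep C σ p l τ q) :
    ∀ c, (C = .star c → Chain c σ p τ q) ∧ (C = .seq c (.star c) → Chain c σ p τ q) := by
  induction h with
  | skip => exact fun c => ⟨fun h => Cmd.noConfusion h, fun h => Cmd.noConfusion h⟩
  | assign => exact fun c => ⟨fun h => Cmd.noConfusion h, fun h => Cmd.noConfusion h⟩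
  | assume' hb => exact fun c => ⟨fun h => Cmd.noConfusion h, fun h => Cmd.noConfusion h⟩
  | tick => exact fun c => ⟨fun h => Cmd.noConfusion h, fun h => Cmd.noConfusion h⟩
  | seq h₁ h₂ ih₁ ih₂ =>
    intro c
    refine ⟨fun h => Cmd.noConfusion h, fun h => ?_⟩
    injection h with e₁ e₂
    subst e₁
    subst e₂
    exact Chain.cons h₁ ((ih₂ _).1 rfl)
  | choiceL h ih => exact fun c => ⟨fun h => Cmd.noConfusion h, fun h => Cmd.noConfusion h⟩
  | choiceR h ih => exact fun c => ⟨fun h => Cmd.noConfusion h, fun h => Cmd.noConfusion h⟩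
  | starZero =>
    intro c
    refine ⟨fun h => ?_, fun h => Cmd.noConfusion h⟩
    injection h with e
    subst e
    exact Chain.nil
  | starStep h ih =>
    intro c
    refine ⟨fun h' => ?_, fun h' => Cmd.noConfusion h'⟩
    injection h' with e
    subst e
    exact (ih _).2 rfl
  | local' v h ih => exact fun c => ⟨fun h => Cmd.noConfusion h, fun h => Cmd.noConfusion h⟩

/-- Per-point completeness. -/
theorem point_complete : ∀ C σ p l τ q, BigStep C σ p l τ q → QBUA (pt σ p) C (pt τ q) := by
  intro C
  induction C with
  | skip =>
    intro σ p l τ q h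
    cases h
    exact QBUA.skip
  | assign x e =>
    intro σ p l τ q h
    cases h
    refine QBUA.cons (fun _ => le_refl _) (QBUA.assign (P := pt σ p) (x := x) (e := e)) ?_
    intro τ'
    refine iSup_le fun v => ?_
    beta_reduce
    by_cases hv : upd τ' x v = σ
    · by_cases hb : τ' x = e (upd τ' x v)
      · have hτ : τ' = upd σ x (e σ) := by
          rw [hv] at hb
          funext y
          by_cases hy : y = x
          · subst hy
            rw [upd_same]
            exact hb
          · rw [upd_ne hy]
            have hvy := congrFun hv y
            rwa [upd_ne hy] at hvy
        rw [hτ, pt_eq]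
        exact le_trans (min_le_left _ _) (pt_le _ _ _)
      · rw [if_neg hb]
        exact le_trans (min_le_right _ _) bot_le
    · rw [pt_ne hv]
      exact le_trans (min_le_left _ _) bot_le
  | assume' b =>
    intro σ p l τ q h
    cases h with
    | assume' hb =>
      refine QBUA.cons ?_ (QBUA.assume' (P := pt σ p) (b := b)) ?_
      · intro σ'
        beta_reduce
        by_cases hσ : σ' = σ
        · subst hσ
          rw [pt_eq]
          refine le_min (le_refl _) ?_
          simp [bnd, hb]
        · rw [pt_ne hσ]
          exact bot_le
      · exact fun σ' => min_le_left _ _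
  | tick e =>
    intro σ p l τ q h
    cases h
    refine QBUA.cons (fun _ => le_refl _) (QBUA.tick (P := pt σ p) (e := e)) ?_
    intro σ'
    beta_reduce
    by_cases hσ : σ' = σ
    · subst hσ
      rw [pt_eq, pt_eq, iv_add, show p + -(e σ') = p - e σ' from by ring]
    · rw [pt_ne hσ, pt_ne hσ, bot_add_iv]
  | seq c₁ c₂ ih₁ ih₂ =>
    intro σ p l τ q h
    cases h with
    | seq h₁ h₂ => exact QBUA.seq (ih₁ _ _ _ _ _ h₁) (ih₂ _ _ _ _ _ h₂)
  | choice c₁ c₂ ih₁ ih₂ =>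
    intro σ p l τ q h
    cases h with
    | choiceL h' => exact QBUA.choiceL (ih₁ _ _ _ _ _ h')
    | choiceR h' => exact QBUA.choiceR (ih₂ _ _ _ _ _ h')
  | star c ih =>
    intro σ p l τ q h
    obtain ⟨n, f, h0, hn, hst⟩ := (chain_aux h c).1 rfl
    have hloop : QBUA (pt (f (min 0 n)).1 (f (min 0 n)).2) (.star c)
        (pt (f (min n n)).1 (f (min n n)).2) := by
      refine QBUA.loop (P := fun i => pt (f (min i n)).1 (f (min i n)).2) (k := n) ?_
      intro i hi
      have e1 : min i n = i := min_eq_left hi.le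
      have e2 : min (i + 1) n = i + 1 := min_eq_left (by omega)
      obtain ⟨l', hb⟩ := hst i hi
      have := ih _ _ _ _ _ hb
      simpa only [e1, e2] using this
    rwa [min_eq_left (Nat.zero_le n), min_self, h0, hn] at hloop
  | local' x c ih =>
    intro σ' p l τ' q h
    cases h with
    | local' v h' =>
      rename_i σ τ
      have h1 := QBUA.local' (x := x) (ih _ _ _ _ _ h')
      have hindep : Indep (fun ρ => decide (ρ x = v)) (modVars (.local' x c)) := by
        intro ρ ρ' hagree
        have hx : ρ x = ρ' x := hagree x (by simp [modVars])
        simp [hx]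
      have h2 := QBUA.constancy (b := fun ρ => decide (ρ x = v)) h1 hindep
      refine QBUA.cons ?_ h2 ?_
      · intro ρ
        beta_reduce
        by_cases hρ : ρ = upd σ x v
        · subst hρ
          rw [pt_eq]
          refine le_min ?_ ?_
          · refine le_trans ?_ (le_iSup (fun v' => pt σ p (upd (upd σ x v) x v')) (σ x))
            rw [upd_upd, upd_self, pt_eq]
          · simp [bnd, upd_same]
        · rw [pt_ne hρ]
          exact bot_le
      · intro ρ
        beta_reduce
        by_cases hx : ρ x = v
        · by_cases hρ : ρ = upd τ x v
          · rw [hρ, pt_eq]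
            exact le_trans (min_le_left _ _) (iSup_le fun v' => pt_le _ _ _)
          · refine le_trans (min_le_left _ _) (le_trans (iSup_le fun v' => ?_) bot_le)
            beta_reduce
            have hne : upd ρ x v' ≠ τ := by
              intro heq
              apply hρ
              funext y
              by_cases hy : y = x
              · subst hy
                rw [upd_same]
                exact hx
              · rw [upd_ne hy]
                have := congrFun heq y
                rwa [upd_ne hy] at this
            rw [pt_ne hne]
        · refine le_trans (min_le_right _ _) ?_
          simp [bnd, hx]

end Aux


theorem qbua_completeness :
    ∀ (P Q : RF) (C : Cmd), FinSupp P → FinSupp Q → BValid P C Q → QBUA P C Q := by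
  intro P Q C _ _ hv
  classical
  have key : ∀ i : {sp : State × ℤ // iv sp.2 ≤ P sp.1},
      ∃ τ, ∃ q : ℤ, iv q ≤ Q τ ∧ BigStepP C i.1.1 i.1.2 τ q := fun i => hv i.1.1 i.1.2 i.2
  choose τf qf hQle hbs using key
  have hd := QBUA.disj (I := {sp : State × ℤ // iv sp.2 ≤ P sp.1})
    (Ps := fun i => pt i.1.1 i.1.2) (Qs := fun i => pt (τf i) (qf i)) (c := C)
    (fun i => by obtain ⟨l, hl⟩ := hbs i; exact point_complete _ _ _ _ _ _ hl)
  refine QBUA.cons ?_ hd ?_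
  · intro σ
    exact rval_le_iSup _ _ (fun m hm => ⟨⟨(σ, m), hm⟩, le_of_eq (pt_eq σ m).symm⟩)
  · intro ρ
    refine iSup_le fun i => ?_
    beta_reduce
    by_cases hρ : ρ = τf i
    · subst hρ
      rw [pt_eq]
      exact hQle i
    · rw [pt_ne hρ]
      exact bot_le
end

section
/- (Strongest-postcondition characterization of QFUA) For every command C and resource functions P, Q: the QFUA validity ⊨F [P] C [Q] holds if and only if post(C, P) ⪯ Q, where post(C, P)(τ) = inf { q ∈ ℤ : ∃σ, p, p ≥ P(σ) and C, σ, p ⇓ τ, q } (infimum taken in ℤ ∪ {−∞, +∞}, with inf ∅ = +∞). -/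
/-- Quantitative strongest postcondition (inf ∅ = +∞). -/
noncomputable def post (c : Cmd) (P : RF) : RF :=
  fun τ => sInf (iv '' {q : ℤ | ∃ σ, ∃ p : ℤ, P σ ≤ iv p ∧ BigStepP c σ p τ q})


lemma iv_le_iv {a b : ℤ} : iv a ≤ iv b ↔ a ≤ b := by
  simp [iv]

lemma bigStep_shift {c σ p l τ q} (h : BigStep c σ p l τ q) (d : ℤ) :
    BigStep c σ (p + d) (l + d) τ (q + d) := by
  induction h with
  | skip => exact .skip
  | assign => exact .assign
  | assume' hb => exact .assume' hb
  | tick =>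
      rename_i e σ' p'
      have h1 : min p' (p' - e σ') + d = min (p' + d) (p' + d - e σ') := by omega
      have h2 : p' - e σ' + d = p' + d - e σ' := by omega
      rw [h1, h2]
      exact .tick
  | seq h1 h2 ih1 ih2 =>
      rename_i l₁ ρ r l₂ τ' q'
      rw [show min l₁ l₂ + d = min (l₁ + d) (l₂ + d) by omega]
      exact .seq ih1 ih2
  | choiceL _ ih => exact .choiceL ih
  | choiceR _ ih => exact .choiceR ih
  | starZero => exact .starZero
  | starStep _ ih => exact .starStep ih
  | local' v _ ih => exact .local' v ih

lemma rval_le_bot (x : RVal) (h : ∀ n : ℤ, x ≤ iv n) : x ≤ ((⊥ : WithBot ℤ) : RVal) := by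
  match x with
  | ⊤ => exact absurd (h 0) (by simp [iv])
  | ((⊥ : WithBot ℤ) : RVal) => rfl
  | ((m : ℤ) : WithBot ℤ) =>
      have := h (m - 1)
      simp [iv] at this

lemma sInf_iv_le {S : Set ℤ} {q : ℤ} :
    sInf (iv '' S) ≤ iv q ↔ ∃ q' ∈ S, q' ≤ q := by
  constructor
  · intro h
    by_contra hc
    push_neg at hc
    have hlb : iv (q + 1) ≤ sInf (iv '' S) := by
      apply le_sInf
      rintro x ⟨q', hq', rfl⟩
      exact iv_le_iv.2 (hc q' hq')
    have := le_trans hlb h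
    rw [iv_le_iv] at this
    omega
  · rintro ⟨q', hq', hle⟩
    exact le_trans (sInf_le ⟨q', hq', rfl⟩) (iv_le_iv.2 hle)

theorem fvalid_iff_post_le (C : Cmd) (P Q : RF) :
    FValid P C Q ↔ rle (post C P) Q := by
  constructor
  · intro hF τ
    unfold post
    match hQ : Q τ with
    | ⊤ => exact le_top
    | (⊥ : WithBot ℤ) =>
        have hall : ∀ n : ℤ, sInf (iv '' {q : ℤ | ∃ σ, ∃ p : ℤ,
            P σ ≤ iv p ∧ BigStepP C σ p τ q}) ≤ iv n := by
          intro n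
          obtain ⟨σ, p, hP, hB⟩ := hF τ n (by rw [hQ]; exact bot_le)
          exact sInf_le ⟨n, ⟨σ, p, hP, hB⟩, rfl⟩
        exact rval_le_bot _ hall
    | ((n : ℤ) : WithBot ℤ) =>
        obtain ⟨σ, p, hP, hB⟩ := hF τ n (le_of_eq hQ)
        exact sInf_le ⟨n, ⟨σ, p, hP, hB⟩, rfl⟩
  · intro hle τ q hQ
    have h := le_trans (hle τ) hQ
    unfold post at h
    rw [sInf_iv_le] at h
    obtain ⟨q', ⟨σ, p, hP, l, hB⟩, hq'⟩ := h
    refine ⟨σ, p + (q - q'), ?_, l + (q - q'), ?_⟩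
    · exact le_trans hP (iv_le_iv.2 (by omega))
    · have := bigStep_shift hB (q - q')
      simpa using this
end
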